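/- Let μ and μ_n (n ≥ 1) be elements of M_O. Then μ_n → μ in M_O if and only if limsup_{n→∞} μ_n(F) ≤ μ(F) for every closed set F ⊆ O that is bounded away from C, and liminf_{n→∞} μ_n(G) ≥ μ(G) for every open set G ⊆ O that is bounded away from C. -/
import Mathlib


open MeasureTheory Metric Filter Topology Set

noncomputable section

open scoped NNReal ENNReal

set_option linter.unusedSectionVars false
set_option maxHeartbeats 2000000

variable {S : Type*} [MetricSpace S] [MeasurableSpace S]

/-- `A` is bounded away from `C`: `A ⊆ S \ C^r` for some `r > 0`. -/
def BddAway (C A : Set S) : Prop := ∃ r > 0, ∀ x ∈ A, r ≤ infDist x C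

/-- The class `C_O` of test functions: bounded, nonnegative, continuous on `O = S \ C`,
and vanishing on `C^r` for some `r > 0` (extended by `0` to all of `S`). -/
def IsCO (C : Set S) (f : S → ℝ) : Prop :=
  ContinuousOn f Cᶜ ∧ (∀ x, 0 ≤ f x) ∧ (∃ B : ℝ, ∀ x, f x ≤ B) ∧
    ∃ r > 0, ∀ x, infDist x C < r → f x = 0

/-- The class `M_O`: Borel measures on `O = S \ C` (i.e. giving no mass to `C`)
that are finite on `S \ C^r` for each `r > 0`. -/
def MemMO (C : Set S) (μ : Measure S) : Prop :=
  μ C = 0 ∧ ∀ r : ℝ, 0 < r → μ {x | r ≤ infDist x C} < ⊤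

/-- Convergence `μ_n → μ` in `M_O`. -/
def MOTendsto (C : Set S) (μn : ℕ → Measure S) (μ : Measure S) : Prop :=
  ∀ f : S → ℝ, IsCO C f →
    Tendsto (fun n => ∫ x, f x ∂ μn n) atTop (𝓝 (∫ x, f x ∂ μ))

/-- The set `{x | r ≤ infDist x C}` is closed. -/
lemma isClosed_K (C : Set S) (r : ℝ) : IsClosed {x : S | r ≤ infDist x C} :=
  isClosed_le continuous_const (continuous_infDist_pt C)

lemma measurableSet_K [BorelSpace S] (C : Set S) (r : ℝ) :
    MeasurableSet {x : S | r ≤ infDist x C} :=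
  (isClosed_K C r).measurableSet

/-- A continuous bounded nonnegative function vanishing near `C` is integrable w.r.t.
any measure that is finite away from `C`. -/
lemma integrable_of_vanish [BorelSpace S] {C : Set S} {f : S → ℝ} (hfc : Continuous f)
    (hf0 : ∀ x, 0 ≤ f x) {B : ℝ} (hB : ∀ x, f x ≤ B) {r : ℝ}
    (hvan : ∀ x, infDist x C < r → f x = 0)
    {ν : Measure S} (hν : ν {x | r ≤ infDist x C} < ⊤) : Integrable f ν := by
  have hK := measurableSet_K C r
  have hf : f = Set.indicator {x : S | r ≤ infDist x C} f := by
    ext x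
    by_cases h : x ∈ {x : S | r ≤ infDist x C}
    · exact (Set.indicator_of_mem h f).symm
    · rw [Set.indicator_of_notMem h]
      exact hvan x (lt_of_not_ge h)
  rw [hf, integrable_indicator_iff hK]
  refine Measure.integrableOn_of_bounded (M := B) hν.ne hfc.aestronglyMeasurable ?_
  filter_upwards with x
  rw [Real.norm_eq_abs, abs_of_nonneg (hf0 x)]; exact hB x

/-- An `IsCO` function is in fact continuous on all of `S` (when `C` is closed). -/
lemma IsCO.continuous {C : Set S} (hC : IsClosed C) {f : S → ℝ} (hf : IsCO C f) :
    Continuous f := by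
  obtain ⟨hfc, _, _, r, hr, hvan⟩ := hf
  rw [continuous_iff_continuousAt]
  intro x
  by_cases hx : x ∈ C
  · have hopen : IsOpen {y : S | infDist y C < r} :=
      isOpen_lt (continuous_infDist_pt C) continuous_const
    have hmem : {y : S | infDist y C < r} ∈ 𝓝 x :=
      hopen.mem_nhds (by simpa [infDist_zero_of_mem hx] using hr)
    have heq : f =ᶠ[𝓝 x] fun _ => (0 : ℝ) := by
      filter_upwards [hmem] with y hy using hvan y hy
    exact ContinuousAt.congr continuousAt_const heq.symm
  · exact hfc.continuousAt (hC.isOpen_compl.mem_nhds hx)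

/-- Portmanteau (i) ⟺ (iii): `μ_n → μ` in `M_O` iff
`limsup μ_n(F) ≤ μ(F)` for all closed `F ⊆ O` bounded away from `C` and
`liminf μ_n(G) ≥ μ(G)` for all open `G ⊆ O` bounded away from `C`. -/
theorem stmt1 [BorelSpace S] [CompleteSpace S] [TopologicalSpace.SeparableSpace S]
    (C : Set S) (hC : IsClosed C)
    (μ : Measure S) (μn : ℕ → Measure S)
    (hμ : MemMO C μ) (hμn : ∀ n, MemMO C (μn n)) :
    MOTendsto C μn μ ↔
      ((∀ F : Set S, IsClosed F → F ⊆ Cᶜ → BddAway C F →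
          Filter.limsup (fun n => μn n F) atTop ≤ μ F) ∧
       (∀ G : Set S, IsOpen G → G ⊆ Cᶜ → BddAway C G →
          μ G ≤ Filter.liminf (fun n => μn n G) atTop)) := by
  constructor
  · intro h
    constructor
    · rintro F hFclosed hFsub ⟨r, hr, hrF⟩
      have hthick : ∀ δ : ℝ, 0 < δ → δ < r →
          Filter.limsup (fun n => μn n F) atTop ≤ μ (thickening δ F) := by
        intro δ hδ hδr
        set f : S → ℝ := fun x => ((thickenedIndicator hδ F x : ℝ≥0) : ℝ) with hfdef
        have hfc : Continuous f := by
          rw [hfdef]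
          exact NNReal.continuous_coe.comp (thickenedIndicator hδ F).continuous
        have hf0 : ∀ x, 0 ≤ f x := by
          intro x; rw [hfdef]; exact (thickenedIndicator hδ F x).coe_nonneg
        have hf1 : ∀ x, f x ≤ 1 := by
          intro x; rw [hfdef]
          exact_mod_cast thickenedIndicator_le_one hδ F x
        have hnotmem : ∀ x : S, infDist x C < r - δ → x ∉ thickening δ F := by
          intro x hx hmem
          rw [mem_thickening_iff] at hmem
          obtain ⟨y, hyF, hxy⟩ := hmem
          have h1 : r ≤ infDist y C := hrF y hyF
          have h2 : infDist y C ≤ infDist x C + dist y x := infDist_le_infDist_add_dist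
          have h3 : dist y x = dist x y := dist_comm y x
          linarith
        have hvan : ∀ x, infDist x C < r - δ → f x = 0 := by
          intro x hx
          have h0 := thickenedIndicator_zero hδ F (hnotmem x hx)
          simp only [hfdef]
          rw [h0, NNReal.coe_zero]
        have hco : IsCO C f := ⟨hfc.continuousOn, hf0, ⟨1, hf1⟩, r - δ, by linarith, hvan⟩
        have hint : ∀ ν : Measure S, MemMO C ν → Integrable f ν := fun ν hν =>
          integrable_of_vanish hfc hf0 hf1 hvan (hν.2 _ (by linarith))
        have hle : ∀ n, μn n F ≤ ENNReal.ofReal (∫ x, f x ∂ μn n) := by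
          intro n
          rw [ofReal_integral_eq_lintegral_ofReal (hint _ (hμn n)) (Eventually.of_forall hf0)]
          calc μn n F = ∫⁻ x, F.indicator 1 x ∂ μn n :=
                (lintegral_indicator_one hFclosed.measurableSet).symm
            _ ≤ ∫⁻ x, ENNReal.ofReal (f x) ∂ μn n := by
                apply lintegral_mono
                intro x
                by_cases hx : x ∈ F
                · have h1 : thickenedIndicator hδ F x = 1 := thickenedIndicator_one hδ F hx
                  have h2 : f x = 1 := by simp only [hfdef]; rw [h1, NNReal.coe_one]
                  rw [Set.indicator_of_mem hx, Pi.one_apply]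
                  show (1 : ℝ≥0∞) ≤ ENNReal.ofReal (f x)
                  rw [h2, ENNReal.ofReal_one]
                · simp [Set.indicator_of_notMem hx]
        have hlim : Tendsto (fun n => ENNReal.ofReal (∫ x, f x ∂ μn n)) atTop
            (𝓝 (ENNReal.ofReal (∫ x, f x ∂ μ))) :=
          (ENNReal.continuous_ofReal.tendsto _).comp (h f hco)
        calc Filter.limsup (fun n => μn n F) atTop
            ≤ Filter.limsup (fun n => ENNReal.ofReal (∫ x, f x ∂ μn n)) atTop :=
              limsup_le_limsup (Eventually.of_forall hle)
          _ = ENNReal.ofReal (∫ x, f x ∂ μ) := hlim.limsup_eq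
          _ = ∫⁻ x, ENNReal.ofReal (f x) ∂ μ :=
              ofReal_integral_eq_lintegral_ofReal (hint _ hμ) (Eventually.of_forall hf0)
          _ ≤ ∫⁻ x, (thickening δ F).indicator 1 x ∂ μ := by
              apply lintegral_mono
              intro x
              by_cases hx : x ∈ thickening δ F
              · have : ENNReal.ofReal (f x) ≤ 1 := by
                  rw [← ENNReal.ofReal_one]
                  exact ENNReal.ofReal_le_ofReal (hf1 x)
                simpa [Set.indicator_of_mem hx] using this
              · have h0 := thickenedIndicator_zero hδ F hx
                have h2 : f x = 0 := by simp only [hfdef]; rw [h0, NNReal.coe_zero]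
                simp [Set.indicator_of_notMem hx, h2]
          _ = μ (thickening δ F) := lintegral_indicator_one isOpen_thickening.measurableSet
      have hfin : ∃ R > 0, μ (thickening R F) ≠ ∞ := by
        refine ⟨r/2, by linarith, ?_⟩
        have hsub : thickening (r/2) F ⊆ {x | r/2 ≤ infDist x C} := by
          intro x hx
          rw [mem_thickening_iff] at hx
          obtain ⟨y, hyF, hxy⟩ := hx
          have h1 : r ≤ infDist y C := hrF y hyF
          have h2 : infDist y C ≤ infDist x C + dist y x := infDist_le_infDist_add_dist
          have h3 : dist y x = dist x y := dist_comm y x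
          simp only [mem_setOf_eq]; linarith
        exact ((measure_mono hsub).trans_lt (hμ.2 _ (by linarith))).ne
      have htend := tendsto_measure_thickening_of_isClosed hfin hFclosed
      refine ge_of_tendsto htend ?_
      filter_upwards [Ioo_mem_nhdsGT_of_mem (Set.left_mem_Ico.mpr hr)] with δ hδ
      exact hthick δ hδ.1 hδ.2
    · rintro G hGopen hGsub ⟨r, hr, hrG⟩
      rcases eq_empty_or_nonempty G with rfl | ⟨x0, hx0⟩
      · simp
      have hCne : C.Nonempty := by
        rcases eq_empty_or_nonempty C with rfl | hne
        · exfalso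
          have := hrG x0 hx0
          rw [infDist_empty] at this
          linarith
        · exact hne
      have hGcne : Gᶜ.Nonempty := hCne.mono (fun y hy hyG => hGsub hyG hy)
      set g : ℕ → S → ℝ := fun k x => min 1 ((k + 1) * infDist x Gᶜ) with hgdef
      have hgc : ∀ k, Continuous (g k) := by
        intro k; rw [hgdef]
        exact continuous_const.min (continuous_const.mul (continuous_infDist_pt Gᶜ))
      have hg0 : ∀ k x, 0 ≤ g k x := by
        intro k x; rw [hgdef]
        exact le_min zero_le_one (mul_nonneg (by positivity) infDist_nonneg)
      have hg1 : ∀ k x, g k x ≤ 1 := by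
        intro k x; rw [hgdef]; exact min_le_left _ _
      have hgsupp : ∀ k x, g k x ≠ 0 → x ∈ G := by
        intro k x hx
        by_contra hxG
        have h0 : infDist x Gᶜ = 0 := infDist_zero_of_mem hxG
        simp [hgdef, h0] at hx
      have hvan : ∀ k x, infDist x C < r → g k x = 0 := by
        intro k x hx
        by_contra hne
        exact absurd (hrG x (hgsupp k x hne)) (not_le.mpr hx)
      have hco : ∀ k, IsCO C (g k) := fun k =>
        ⟨(hgc k).continuousOn, hg0 k, ⟨1, hg1 k⟩, r, hr, hvan k⟩
      have hint : ∀ k (ν : Measure S), MemMO C ν → Integrable (g k) ν := fun k ν hν =>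
        integrable_of_vanish (hgc k) (hg0 k) (hg1 k) (hvan k) (hν.2 _ hr)
      have hleG : ∀ k (ν : Measure S), ∫⁻ x, ENNReal.ofReal (g k x) ∂ ν ≤ ν G := by
        intro k ν
        calc ∫⁻ x, ENNReal.ofReal (g k x) ∂ ν ≤ ∫⁻ x, G.indicator 1 x ∂ ν := by
              apply lintegral_mono
              intro x
              by_cases hx : x ∈ G
              · have h1 : ENNReal.ofReal (g k x) ≤ 1 := by
                  rw [← ENNReal.ofReal_one]
                  exact ENNReal.ofReal_le_ofReal (hg1 k x)
                simpa [Set.indicator_of_mem hx] using h1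
              · have h0 : g k x = 0 := by
                  by_contra hne; exact hx (hgsupp k x hne)
                simp [Set.indicator_of_notMem hx, h0]
          _ = ν G := lintegral_indicator_one hGopen.measurableSet
      have hkey : ∀ k, ∫⁻ x, ENNReal.ofReal (g k x) ∂ μ
          ≤ Filter.liminf (fun n => μn n G) atTop := by
        intro k
        have htd : Tendsto (fun n => ENNReal.ofReal (∫ x, g k x ∂ μn n)) atTop
            (𝓝 (ENNReal.ofReal (∫ x, g k x ∂ μ))) :=
          (ENNReal.continuous_ofReal.tendsto _).comp (h (g k) (hco k))
        rw [ofReal_integral_eq_lintegral_ofReal (hint k _ hμ)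
          (Eventually.of_forall (hg0 k))] at htd
        calc ∫⁻ x, ENNReal.ofReal (g k x) ∂ μ
            = Filter.liminf (fun n => ENNReal.ofReal (∫ x, g k x ∂ μn n)) atTop :=
              htd.liminf_eq.symm
          _ ≤ Filter.liminf (fun n => μn n G) atTop := by
              have hev : ∀ᶠ n in atTop,
                  ENNReal.ofReal (∫ x, g k x ∂ μn n) ≤ μn n G := by
                filter_upwards with n
                rw [ofReal_integral_eq_lintegral_ofReal (hint k _ (hμn n))
                  (Eventually.of_forall (hg0 k))]
                exact hleG k (μn n)
              exact liminf_le_liminf hev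
      have hmono : ∀ x : S, Monotone (fun k => ENNReal.ofReal (g k x)) := by
        intro x k l hkl
        apply ENNReal.ofReal_le_ofReal
        rw [hgdef]
        refine min_le_min le_rfl (mul_le_mul_of_nonneg_right ?_ infDist_nonneg)
        have : (k : ℝ) ≤ l := Nat.cast_le.mpr hkl
        linarith
      have htends : ∀ x : S, Tendsto (fun k => ENNReal.ofReal (g k x)) atTop
          (𝓝 (G.indicator 1 x)) := by
        intro x
        by_cases hx : x ∈ G
        · have hpos : 0 < infDist x Gᶜ :=
            (hGopen.isClosed_compl.notMem_iff_infDist_pos hGcne).mp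
              (Set.notMem_compl_iff.mpr hx)
          rw [Set.indicator_of_mem hx, Pi.one_apply]
          have hev : (fun k : ℕ => ENNReal.ofReal (g k x)) =ᶠ[atTop] fun _ => (1 : ℝ≥0∞) := by
            filter_upwards [eventually_ge_atTop ⌈1 / infDist x Gᶜ⌉₊] with k hk
            have h1 : 1 / infDist x Gᶜ ≤ (k : ℝ) + 1 := by
              calc 1 / infDist x Gᶜ ≤ (⌈1 / infDist x Gᶜ⌉₊ : ℝ) := Nat.le_ceil _
                _ ≤ (k : ℝ) := Nat.cast_le.mpr hk
                _ ≤ (k : ℝ) + 1 := by linarith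
            have h2 : 1 ≤ ((k : ℝ) + 1) * infDist x Gᶜ := by
              rw [div_le_iff₀ hpos] at h1
              linarith
            have h3 : g k x = 1 := by rw [hgdef]; exact min_eq_left h2
            rw [h3, ENNReal.ofReal_one]
          exact Tendsto.congr' (EventuallyEq.symm hev) tendsto_const_nhds
        · rw [Set.indicator_of_notMem hx]
          have h0 : ∀ k, g k x = 0 := fun k => by
            by_contra hne; exact hx (hgsupp k x hne)
          have : (fun k => ENNReal.ofReal (g k x)) = fun _ => 0 := by
            funext k; rw [h0 k, ENNReal.ofReal_zero]
          rw [this]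
          exact tendsto_const_nhds
      have hMCT : Tendsto (fun k => ∫⁻ x, ENNReal.ofReal (g k x) ∂ μ) atTop (𝓝 (μ G)) := by
        have h1 := lintegral_tendsto_of_tendsto_of_monotone (μ := μ)
          (f := fun k x => ENNReal.ofReal (g k x)) (F := fun x => G.indicator 1 x)
          (fun k => ((hgc k).measurable.ennreal_ofReal).aemeasurable)
          (ae_of_all _ hmono) (ae_of_all _ htends)
        rwa [lintegral_indicator_one hGopen.measurableSet] at h1
      exact le_of_tendsto hMCT (Eventually.of_forall hkey)
  · rintro ⟨hclosed, hopen⟩ f hfco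
    have hcont : Continuous f := hfco.continuous hC
    obtain ⟨-, hf0, ⟨B, hB⟩, r, hr, hvan⟩ := hfco
    set B' : ℝ := max B 1 with hB'def
    have hB'pos : (0 : ℝ) < B' := lt_of_lt_of_le one_pos (le_max_right _ _)
    have hfB' : ∀ x, f x ≤ B' := fun x => (hB x).trans (le_max_left _ _)
    set K : Set S := {x | r ≤ infDist x C} with hKdef
    have hKsubO : K ⊆ Cᶜ := by
      intro x hx hxC
      have h0 : infDist x C = 0 := infDist_zero_of_mem hxC
      rw [hKdef, mem_setOf_eq, h0] at hx
      linarith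
    have hsuppK : ∀ t : ℝ, 0 < t → ∀ x, t ≤ f x → x ∈ K := by
      intro t ht x hx
      by_contra hxK
      have h0 : f x = 0 := hvan x (lt_of_not_ge hxK)
      linarith
    have hμK : μ K < ⊤ := hμ.2 r hr
    have hlimsupK : Filter.limsup (fun n => μn n K) atTop ≤ μ K :=
      hclosed K (isClosed_K C r) hKsubO ⟨r, hr, fun x hx => hx⟩
    obtain ⟨N, hN⟩ : ∃ N, ∀ n ≥ N, μn n K ≤ μ K + 1 := by
      have hlt : Filter.limsup (fun n => μn n K) atTop < μ K + 1 :=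
        lt_of_le_of_lt hlimsupK (ENNReal.lt_add_right hμK.ne one_ne_zero)
      have hev := Filter.eventually_lt_of_limsup_lt hlt
      rw [eventually_atTop] at hev
      obtain ⟨N, hN⟩ := hev
      exact ⟨N, fun n hn => (hN n hn).le⟩
    have hmeas_lt : ∀ ν : Measure S, ∫⁻ x, ENNReal.ofReal (f x) ∂ ν
        = ∫⁻ t in Ioi (0 : ℝ), ν {x | t < f x} := fun ν =>
      lintegral_eq_lintegral_meas_lt ν (Eventually.of_forall hf0) hcont.aemeasurable
    have hanti : ∀ (ν : Measure S), Measurable (fun t : ℝ => ν {x | t < f x}) := fun ν =>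
      Antitone.measurable (fun s t hst =>
        measure_mono (fun x hx => lt_of_le_of_lt hst hx))
    have hliminf : ∫⁻ x, ENNReal.ofReal (f x) ∂ μ ≤
        Filter.liminf (fun n => ∫⁻ x, ENNReal.ofReal (f x) ∂ μn n) atTop := by
      calc ∫⁻ x, ENNReal.ofReal (f x) ∂ μ
          = ∫⁻ t in Ioi (0 : ℝ), μ {x | t < f x} := hmeas_lt μ
        _ ≤ ∫⁻ t in Ioi (0 : ℝ), Filter.liminf (fun n => μn n {x | t < f x}) atTop := by
            apply lintegral_mono_ae
            filter_upwards [ae_restrict_mem measurableSet_Ioi] with t ht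
            exact hopen _ (isOpen_lt continuous_const hcont)
              (fun x hx => hKsubO (hsuppK t ht x hx.le))
              ⟨r, hr, fun x hx => hsuppK t ht x hx.le⟩
        _ ≤ Filter.liminf (fun n => ∫⁻ t in Ioi (0 : ℝ), μn n {x | t < f x}) atTop :=
            lintegral_liminf_le (fun n => hanti (μn n))
        _ = Filter.liminf (fun n => ∫⁻ x, ENNReal.ofReal (f x) ∂ μn n) atTop :=
            liminf_congr (Eventually.of_forall fun n => (hmeas_lt (μn n)).symm)
    have hlimsup : Filter.limsup (fun n => ∫⁻ x, ENNReal.ofReal (f x) ∂ μn n) atTop ≤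
        ∫⁻ x, ENNReal.ofReal (f x) ∂ μ := by
      have hshift : Filter.limsup (fun n => ∫⁻ x, ENNReal.ofReal (f x) ∂ μn n) atTop
          = Filter.limsup (fun n => ∫⁻ t in Ioi (0 : ℝ), μn (n + N) {x | t < f x}) atTop := by
        rw [← Filter.limsup_nat_add (fun n => ∫⁻ x, ENNReal.ofReal (f x) ∂ μn n) N]
        exact limsup_congr (Eventually.of_forall fun n => hmeas_lt (μn (n + N)))
      rw [hshift]
      set gbd : ℝ → ℝ≥0∞ := (Ioc (0 : ℝ) B').indicator (fun _ => μ K + 1) with hgbd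
      have hbound : ∀ n, (fun t => μn (n + N) {x | t < f x})
          ≤ᵐ[volume.restrict (Ioi 0)] gbd := by
        intro n
        filter_upwards [ae_restrict_mem measurableSet_Ioi] with t ht
        by_cases htB : t ≤ B'
        · rw [hgbd]
          have hmem : t ∈ Ioc (0 : ℝ) B' := ⟨ht, htB⟩
          rw [Set.indicator_of_mem hmem]
          exact le_trans (measure_mono fun x hx => hsuppK t ht x hx.le)
            (hN _ (Nat.le_add_left N n))
        · have hempty : {x | t < f x} = ∅ := by
            ext x
            simp only [mem_setOf_eq, mem_empty_iff_false, iff_false, not_lt]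
            exact (hfB' x).trans (le_of_not_ge htB)
          rw [hempty]
          simp
      have hgfin : ∫⁻ t, gbd t ∂ (volume.restrict (Ioi 0)) ≠ ⊤ := by
        rw [hgbd, lintegral_indicator measurableSet_Ioc, setLIntegral_const]
        refine (ENNReal.mul_lt_top (ENNReal.add_lt_top.mpr ⟨hμK, ENNReal.one_lt_top⟩) ?_).ne
        rw [Measure.restrict_apply measurableSet_Ioc]
        exact lt_of_le_of_lt (measure_mono Set.inter_subset_left) measure_Ioc_lt_top
      calc Filter.limsup (fun n => ∫⁻ t in Ioi (0 : ℝ), μn (n + N) {x | t < f x}) atTop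
          ≤ ∫⁻ t in Ioi (0 : ℝ), Filter.limsup (fun n => μn (n + N) {x | t < f x}) atTop :=
            limsup_lintegral_le gbd (fun n => hanti (μn (n + N))) hbound hgfin
        _ ≤ ∫⁻ t in Ioi (0 : ℝ), μ {x | t ≤ f x} := by
            apply lintegral_mono_ae
            filter_upwards [ae_restrict_mem measurableSet_Ioi] with t ht
            calc Filter.limsup (fun n => μn (n + N) {x | t < f x}) atTop
                ≤ Filter.limsup (fun n => μn (n + N) {x | t ≤ f x}) atTop :=
                  limsup_le_limsup (Eventually.of_forall fun n =>
                    measure_mono fun x hx => (le_of_lt hx : t ≤ f x))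
              _ = Filter.limsup (fun n => μn n {x | t ≤ f x}) atTop :=
                  Filter.limsup_nat_add (fun n => μn n {x | t ≤ f x}) N
              _ ≤ μ {x | t ≤ f x} := hclosed _ (isClosed_le continuous_const hcont)
                  (fun x hx => hKsubO (hsuppK t ht x hx))
                  ⟨r, hr, fun x hx => hsuppK t ht x hx⟩
        _ = ∫⁻ t in Ioi (0 : ℝ), μ {x | t < f x} :=
            lintegral_congr_ae (meas_le_ae_eq_meas_lt μ (volume.restrict (Ioi 0)) f)
        _ = ∫⁻ x, ENNReal.ofReal (f x) ∂ μ := (hmeas_lt μ).symm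
    have htd : Tendsto (fun n => ∫⁻ x, ENNReal.ofReal (f x) ∂ μn n) atTop
        (𝓝 (∫⁻ x, ENNReal.ofReal (f x) ∂ μ)) :=
      tendsto_of_le_liminf_of_limsup_le hliminf hlimsup
    have heq : ∀ ν : Measure S, MemMO C ν →
        ∫ x, f x ∂ ν = (∫⁻ x, ENNReal.ofReal (f x) ∂ ν).toReal := by
      intro ν hν
      rw [← ofReal_integral_eq_lintegral_ofReal
        (integrable_of_vanish hcont hf0 hfB' hvan (hν.2 r hr)) (Eventually.of_forall hf0)]
      rw [ENNReal.toReal_ofReal (integral_nonneg hf0)]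
    have hIμfin : ∫⁻ x, ENNReal.ofReal (f x) ∂ μ ≠ ⊤ := by
      rw [← ofReal_integral_eq_lintegral_ofReal
        (integrable_of_vanish hcont hf0 hfB' hvan (hμ.2 r hr)) (Eventually.of_forall hf0)]
      exact ENNReal.ofReal_ne_top
    rw [heq μ hμ]
    exact Tendsto.congr (fun n => (heq (μn n) (hμn n)).symm)
      ((ENNReal.tendsto_toReal hIμfin).comp htd)
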